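/- Let K be a field (or any reduced commutative ring), let m_1 < m_2 < … < m_n be positive integers, fix 3 ≤ i ≤ n, and let a, b, c, α, β, γ be nonnegative integers with m_i = c·m_{i−1} + b·m_2 + a·m_1 = γ·m_{i−1} − β·m_2 − α·m_1, γ − β − α − 1 ≥ 0, and m_1 ≥ β·(m_2 − m_1). If t, x_i ∈ K and substituting x_0 = 1, x_j = t^{m_j} for 1 ≤ j ≤ i − 1 into F_{i−1} gives the value 0, then x_i = t^{m_i}. -/

import Mathlib

/-- The polynomial `F_{i-1} = x_{i-1}^{m_i} + G_{i-1} + H_{i-1}` of Lemma 2 of the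
paper, with coefficients in a commutative ring `K`, in variables `x_j` indexed by
`j : ℕ` (only `x_0, x_1, x_2, x_{i-1}, x_i` occur). -/
noncomputable def Fpoly (K : Type*) [CommRing K] (m : ℕ → ℕ)
    (i a b c α β γ : ℕ) : MvPolynomial ℕ K :=
  MvPolynomial.X (i - 1) ^ m i
    + ∑ k ∈ Finset.Icc 1 (m (i - 1) - m 1),
        MvPolynomial.C ((-1 : K) ^ k * ((m (i - 1)).choose k : K)) *
          (MvPolynomial.X 1 ^ (k * α) * MvPolynomial.X 2 ^ (k * β) *
            MvPolynomial.X (i - 1) ^ (m i - k * γ) * MvPolynomial.X i ^ k *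
            MvPolynomial.X 0 ^ (k * (γ - β - α - 1)))
    + ∑ k ∈ Finset.Icc (m (i - 1) - m 1 + 1) (m (i - 1)),
        MvPolynomial.C ((-1 : K) ^ k * ((m (i - 1)).choose k : K)) *
          (MvPolynomial.X 1 ^ (a * (m (i - 1) - k)) *
            MvPolynomial.X 2 ^ (b * (m (i - 1) - k)) *
            MvPolynomial.X (i - 1) ^ (c * (m (i - 1) - k)) * MvPolynomial.X i ^ k *
            MvPolynomial.X 0 ^
              (k * (a + b + c - 1) - b * (m (i - 1) - m 2) - a * (m (i - 1) - m 1)))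

/-!
Under `x₀ ↦ 1`, `x_j ↦ t ^ m_j`, `x_i ↦ y`, the `k`-th monomial of `F_{i-1}` becomes
`(-1)^k * C(m_{i-1}, k) * (t ^ m_i) ^ (m_{i-1} - k) * y ^ k`: in the second sum this is the
relation `m_i = c m_{i-1} + b m_2 + a m_1`, in the first one the relation
`m_i + β m_2 + α m_1 = γ m_{i-1}`. Hence the value of `F_{i-1}` is `(t ^ m_i - y) ^ m_{i-1}`,
and since `m_{i-1} > 0` and a field has no nonzero nilpotents, `y = t ^ m_i`.
-/

open Finset

theorem sub_pow_eq_sum_neg_one_pow {R : Type*} [CommRing R] (x y : R) (n : ℕ) :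
    (x - y) ^ n = ∑ k ∈ range (n + 1), (-1) ^ k * (n.choose k : R) * (x ^ (n - k) * y ^ k) := by
  rw [sub_eq_neg_add, add_pow]
  refine sum_congr rfl fun k _ => ?_
  rw [neg_pow]
  ring

theorem sum_range_succ_eq_add_sum_Icc_add_sum_Icc {R : Type*} [AddCommMonoid R] (g : ℕ → R)
    {N M : ℕ} (h : N ≤ M) :
    ∑ k ∈ range (M + 1), g k = g 0 + ∑ k ∈ Icc 1 N, g k + ∑ k ∈ Icc (N + 1) M, g k := by
  rw [range_eq_Ico, sum_eq_sum_Ico_succ_bot (by omega : 0 < M + 1), zero_add, add_assoc,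
    ← Ico_add_one_right_eq_Icc, ← Ico_add_one_right_eq_Icc,
    sum_Ico_consecutive _ (by omega) (by omega)]

theorem mul_sub_le_of_add_eq_mul {M m₁ m₂ mᵢ α β γ : ℕ} (h : mᵢ + β * m₂ + α * m₁ = γ * M)
    (hγ : β + α + 1 ≤ γ) (hβ : β * (m₂ - m₁) ≤ m₁) : γ * (M - m₁) ≤ mᵢ := by
  have hβ' : β * m₂ ≤ β * m₁ + β * (m₂ - m₁) := by
    rw [← mul_add]; exact Nat.mul_le_mul_left _ (by omega)
  have hγ' : β * m₁ + α * m₁ + m₁ ≤ γ * m₁ := by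
    simpa [add_mul] using Nat.mul_le_mul_right m₁ hγ
  rw [Nat.mul_sub]
  omega

theorem exponent_eq_of_add_eq_mul {M m₁ m₂ mᵢ α β γ k : ℕ} (h : mᵢ + β * m₂ + α * m₁ = γ * M)
    (hkγ : k * γ ≤ mᵢ) (hkM : k ≤ M) :
    m₁ * (k * α) + m₂ * (k * β) + M * (mᵢ - k * γ) = mᵢ * (M - k) := by
  zify [hkγ, hkM] at h ⊢
  linear_combination (k : ℤ) * h

theorem eval_Fpoly {K : Type*} [CommRing K] {m : ℕ → ℕ} {i a b c α β γ : ℕ} {t y : K}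
    {f : ℕ → K} (heq1 : m i = c * m (i - 1) + b * m 2 + a * m 1)
    (heq2 : m i + β * m 2 + α * m 1 = γ * m (i - 1))
    (hγ : β + α + 1 ≤ γ) (hβ : β * (m 2 - m 1) ≤ m 1)
    (hf0 : f 0 = 1) (hf1 : f 1 = t ^ m 1) (hf2 : f 2 = t ^ m 2)
    (hf : f (i - 1) = t ^ m (i - 1)) (hfi : f i = y) :
    MvPolynomial.eval f (Fpoly K m i a b c α β γ) = (t ^ m i - y) ^ m (i - 1) := by
  set M := m (i - 1)
  have hlow : ∀ k ∈ Icc 1 (M - m 1),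
      (t ^ m 1) ^ (k * α) * (t ^ m 2) ^ (k * β) * (t ^ M) ^ (m i - k * γ)
        = (t ^ m i) ^ (M - k) := by
    intro k hk
    have hkM := (mem_Icc.1 hk).2
    -- keeps the truncated exponent `m i - k * γ` below from being junk
    have hkγ : k * γ ≤ m i := by
      rw [mul_comm]
      exact (Nat.mul_le_mul_left γ hkM).trans (mul_sub_le_of_add_eq_mul heq2 hγ hβ)
    simp only [← pow_mul, ← pow_add, exponent_eq_of_add_eq_mul heq2 hkγ (by omega)]
  have hhigh : ∀ k : ℕ,
      (t ^ m 1) ^ (a * (M - k)) * (t ^ m 2) ^ (b * (M - k)) * (t ^ M) ^ (c * (M - k))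
        = (t ^ m i) ^ (M - k) := by
    intro k
    simp only [← pow_mul, ← pow_add, heq1]
    congr 1
    ring
  rw [Fpoly, sub_pow_eq_sum_neg_one_pow,
    sum_range_succ_eq_add_sum_Icc_add_sum_Icc _ (Nat.sub_le M (m 1))]
  simp only [map_add, map_sum, map_mul, map_pow, MvPolynomial.eval_C, MvPolynomial.eval_X,
    hf0, hf1, hf2, hf, hfi, one_pow, mul_one]
  congr 2
  · simp [← pow_mul, mul_comm]
  · exact sum_congr rfl fun k hk => by rw [hlow k hk]
  · exact funext fun k => by rw [hhigh k]

theorem stmt_11_general {K : Type*} [Field K] (n i : ℕ) (hi : 3 ≤ i) (hin : i ≤ n)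
    (m : ℕ → ℕ)
    (hmono : ∀ j, 1 ≤ j → j < n → m j < m (j + 1))
    (a b c α β γ : ℕ)
    (heq1 : m i = c * m (i - 1) + b * m 2 + a * m 1)
    (heq2 : m i + β * m 2 + α * m 1 = γ * m (i - 1))
    (hγ : β + α + 1 ≤ γ) (hβ : β * (m 2 - m 1) ≤ m 1)
    (t y : K)
    (hval : MvPolynomial.eval
        (fun j => if j = 0 then 1 else if j ≤ i - 1 then t ^ m j else y)
        (Fpoly K m i a b c α β γ) = 0) :
    y = t ^ m i := by
  have hM : 0 < m (i - 1) := by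
    have := hmono (i - 2) (by omega) (by omega)
    rw [show i - 2 + 1 = i - 1 by omega] at this
    omega
  rw [eval_Fpoly (t := t) (y := y) heq1 heq2 hγ hβ (by simp)
      (by simp [show 1 ≤ i - 1 by omega]) (by simp [show 2 ≤ i - 1 by omega])
      (by simp [show i - 1 ≠ 0 by omega]) (by simp [show i ≠ 0 by omega, show ¬i ≤ i - 1 by omega]),
    pow_eq_zero_iff hM.ne', sub_eq_zero] at hval
  exact hval.symm

/-- The inductive step in the proof of Theorem 1 of the paper: over a field,
if substituting `x_0 = 1`, `x_j = t^{m_j}` for `1 ≤ j ≤ i-1` and `x_i = y`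
into `F_{i-1}` gives `0`, then `y = t^{m_i}`. -/
theorem stmt_11 {K : Type*} [Field K] (n i : ℕ) (hi : 3 ≤ i) (hin : i ≤ n)
    (m : ℕ → ℕ)
    (hpos : ∀ j, 1 ≤ j → j ≤ n → 0 < m j)
    (hmono : ∀ j, 1 ≤ j → j < n → m j < m (j + 1))
    (a b c α β γ : ℕ)
    (heq1 : m i = c * m (i - 1) + b * m 2 + a * m 1)
    (heq2 : m i + β * m 2 + α * m 1 = γ * m (i - 1))
    (hγ : β + α + 1 ≤ γ) (hβ : β * (m 2 - m 1) ≤ m 1)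
    (t y : K)
    (hval : MvPolynomial.eval
        (fun j => if j = 0 then 1 else if j ≤ i - 1 then t ^ m j else y)
        (Fpoly K m i a b c α β γ) = 0) :
    y = t ^ m i :=
  stmt_11_general n i hi hin m hmono a b c α β γ heq1 heq2 hγ hβ t y hval
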